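/- (Type-B fundamental ribbon operators multiply according to H^cop ⊗ H.) Define, for a, h ∈ H, the fundamental ribbon operators on H* by F^{(a,h)}(τ_R, ±) := ε(h)·T^a_± (right-handed direct triangle) and F^{(a,h)}(τ̃_L, ±) := ε(a)·L^h_± (left-handed dual triangle). Then for each fixed sign and all a, a', h, h' ∈ H: F^{(a,h)}(τ_R,±) ∘ F^{(a',h')}(τ_R,±) = F^{(aa', hh')}(τ_R,±) and F^{(a,h)}(τ̃_L,±) ∘ F^{(a',h')}(τ̃_L,±) = F^{(aa', hh')}(τ̃_L,±), where aa' and hh' are products in H. -/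

import Mathlib

/-!
Common setup for formalizing "Ribbon operators in the semidual lattice code model"
(Soglohu–Osei–Osumanu).

`H` is a Hopf algebra over `ℂ`.  Its dual Hopf algebra `H*` is realised as
`Module.Dual ℂ H`, with evaluation pairing `⟨h, φ⟩ = φ h`.  The multiplication of
`H*` is dual to the comultiplication of `H` and the comultiplication of `H*` is
dual to the multiplication of `H`; consequently every edge operator below, given
in the paper by a Sweedler formula on `H*`, is pre-composition
(`LinearMap.dualMap`) with an explicit linear endomorphism of `H`.  For instance
`L^h₊(φ) = ⟨h, S(φ₍₁₎) φ₍₃₎⟩ φ₍₂₎` is exactly `(L^h₊ φ)(x) = Σ φ (S h₍₁₎ * x * h₍₂₎)`.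
Since the antipode is assumed involutive (`S⁻¹ = S`), occurrences of `S⁻¹` are
rendered as `S`.
-/

open TensorProduct

noncomputable section

namespace SemidualKitaev

variable {H : Type} [Ring H] [HopfAlgebra ℂ H]

/-- The antipode of `H`. -/
abbrev S : H →ₗ[ℂ] H := HopfAlgebra.antipode (R := ℂ)

/-- The comultiplication of `H`. -/
abbrev Δ : H →ₗ[ℂ] H ⊗[ℂ] H := Coalgebra.comul (R := ℂ)

/-- The counit of `H`. -/
abbrev ε : H →ₗ[ℂ] ℂ := Coalgebra.counit (R := ℂ)

/-- `sandwich (u ⊗ v) : x ↦ u * x * v`. -/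
def sandwich : H ⊗[ℂ] H →ₗ[ℂ] H →ₗ[ℂ] H :=
  TensorProduct.lift <| LinearMap.mk₂ ℂ
    (fun u v => (LinearMap.mulRight ℂ v) ∘ₗ (LinearMap.mulLeft ℂ u))
    (fun u u' v => LinearMap.ext fun x => by simp [add_mul])
    (fun c u v => LinearMap.ext fun x => by simp [smul_mul_assoc])
    (fun u v v' => LinearMap.ext fun x => by simp [mul_add])
    (fun c u v => LinearMap.ext fun x => by simp [mul_smul_comm])

@[simp] lemma sandwich_tmul (u v x : H) : sandwich (u ⊗ₜ[ℂ] v) x = u * x * v := rfl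

/-! ### Edge (triangle) operators on `H* = Module.Dual ℂ H`

Left-module versions (eq. (3.3) of the paper). -/

/-- `L^h₊(φ) = ⟨h, S(φ₍₁₎) φ₍₃₎⟩ φ₍₂₎`, i.e. `(L^h₊ φ)(x) = Σ φ (S h₍₁₎ * x * h₍₂₎)`. -/
def Lp (h : H) : Module.Dual ℂ H →ₗ[ℂ] Module.Dual ℂ H :=
  (sandwich ((TensorProduct.map S LinearMap.id) (Δ h))).dualMap

/-- `L^h₋(φ) = ⟨h, φ₍₃₎ S⁻¹(φ₍₁₎)⟩ φ₍₂₎`, i.e. `(L^h₋ φ)(x) = Σ φ (S⁻¹ h₍₂₎ * x * h₍₁₎)`,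
with `S⁻¹ = S`. -/
def Lm (h : H) : Module.Dual ℂ H →ₗ[ℂ] Module.Dual ℂ H :=
  (sandwich ((TensorProduct.map S LinearMap.id) ((TensorProduct.comm ℂ H H) (Δ h)))).dualMap

/-- `T^a₊(φ) = ⟨S a, φ₍₁₎⟩ φ₍₂₎`, i.e. `(T^a₊ φ)(x) = φ (S a * x)`. -/
def Tp (a : H) : Module.Dual ℂ H →ₗ[ℂ] Module.Dual ℂ H :=
  (LinearMap.mulLeft ℂ (S a)).dualMap

/-- `T^a₋(φ) = ⟨a, φ₍₂₎⟩ φ₍₁₎`, i.e. `(T^a₋ φ)(x) = φ (x * a)`. -/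
def Tm (a : H) : Module.Dual ℂ H →ₗ[ℂ] Module.Dual ℂ H :=
  (LinearMap.mulRight ℂ a).dualMap

/-! Right-module versions (eq. (3.14) of the paper). -/

/-- `L̃^h₊(φ) = ⟨h, S(φ₍₃₎) φ₍₁₎⟩ φ₍₂₎`, i.e. `(L̃^h₊ φ)(x) = Σ φ (h₍₂₎ * x * S h₍₁₎)`. -/
def Ltp (h : H) : Module.Dual ℂ H →ₗ[ℂ] Module.Dual ℂ H :=
  (sandwich ((TensorProduct.map LinearMap.id S) ((TensorProduct.comm ℂ H H) (Δ h)))).dualMap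

/-- `L̃^h₋(φ) = ⟨h, φ₍₁₎ S⁻¹(φ₍₃₎)⟩ φ₍₂₎`, i.e. `(L̃^h₋ φ)(x) = Σ φ (h₍₁₎ * x * S⁻¹ h₍₂₎)`,
with `S⁻¹ = S`. -/
def Ltm (h : H) : Module.Dual ℂ H →ₗ[ℂ] Module.Dual ℂ H :=
  (sandwich ((TensorProduct.map LinearMap.id S) (Δ h))).dualMap

/-- `T̃^a₊(φ) = ⟨a, φ₍₁₎⟩ φ₍₂₎`, i.e. `(T̃^a₊ φ)(x) = φ (a * x)`. -/
def Ttp (a : H) : Module.Dual ℂ H →ₗ[ℂ] Module.Dual ℂ H :=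
  (LinearMap.mulLeft ℂ a).dualMap

/-- `T̃^a₋(φ) = ⟨S⁻¹ a, φ₍₂₎⟩ φ₍₁₎`, i.e. `(T̃^a₋ φ)(x) = φ (x * S⁻¹ a)`, with `S⁻¹ = S`. -/
def Ttm (a : H) : Module.Dual ℂ H →ₗ[ℂ] Module.Dual ℂ H :=
  (LinearMap.mulRight ℂ (S a)).dualMap

/-- The antipode `S_{H*}` of the dual Hopf algebra: `S_{H*}(φ) = φ ∘ S`. -/
def Sdual : Module.Dual ℂ H →ₗ[ℂ] Module.Dual ℂ H := (S (H := H)).dualMap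

/-- The composite edge operator `M^{(a,h)}₊ = T^a₊ ∘ L^h₊`. -/
def Mp (a h : H) : Module.Dual ℂ H →ₗ[ℂ] Module.Dual ℂ H := Tp a ∘ₗ Lp h

/-- The composite edge operator `M^{(a,h)}₋ = T^a₋ ∘ L^h₋`. -/
def Mm (a h : H) : Module.Dual ℂ H →ₗ[ℂ] Module.Dual ℂ H := Tm a ∘ₗ Lm h

/-- The right action of `M(H)` on `H*` (eq. (2.10) of the paper):
`φ ◁ (a ⊗ h) = ⟨a h₍₁₎, φ₍₁₎⟩ ⟨S h₍₂₎, φ₍₃₎⟩ φ₍₂₎`,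
i.e. `(ract φ a h)(x) = Σ φ (a * h₍₁₎ * x * S h₍₂₎)`. -/
def ract (φ : Module.Dual ℂ H) (a h : H) : Module.Dual ℂ H :=
  (sandwich ((TensorProduct.map (LinearMap.mulLeft ℂ a) S) (Δ h))).dualMap φ

/-- The (convolution) multiplication of the dual Hopf algebra `H*`:
`(φ ∗ ψ)(x) = Σ φ(x₍₁₎) ψ(x₍₂₎)`. -/
def dualMul (φ ψ : Module.Dual ℂ H) : Module.Dual ℂ H :=
  (LinearMap.mul' ℂ ℂ) ∘ₗ (TensorProduct.map φ ψ) ∘ₗ Δ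

/-- The opposite multiplication `∗op` of `H*`. -/
def dualMulOp (φ ψ : Module.Dual ℂ H) : Module.Dual ℂ H := dualMul ψ φ

/-! ### Iterated comultiplications, `Δⁿ h = Σ h₍₁₎ ⊗ (h₍₂₎ ⊗ (⋯ ⊗ h₍ₙ₊₁₎))` -/

def Δ2 : H →ₗ[ℂ] H ⊗[ℂ] (H ⊗[ℂ] H) := (LinearMap.lTensor H Δ) ∘ₗ Δ
def Δ3 : H →ₗ[ℂ] H ⊗[ℂ] (H ⊗[ℂ] (H ⊗[ℂ] H)) := (LinearMap.lTensor H Δ2) ∘ₗ Δ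
def Δ4 : H →ₗ[ℂ] H ⊗[ℂ] (H ⊗[ℂ] (H ⊗[ℂ] (H ⊗[ℂ] H))) := (LinearMap.lTensor H Δ3) ∘ₗ Δ
def Δ5 : H →ₗ[ℂ] H ⊗[ℂ] (H ⊗[ℂ] (H ⊗[ℂ] (H ⊗[ℂ] (H ⊗[ℂ] H)))) :=
  (LinearMap.lTensor H Δ4) ∘ₗ Δ
def Δ6 : H →ₗ[ℂ] H ⊗[ℂ] (H ⊗[ℂ] (H ⊗[ℂ] (H ⊗[ℂ] (H ⊗[ℂ] (H ⊗[ℂ] H))))) :=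
  (LinearMap.lTensor H Δ5) ∘ₗ Δ
def Δ7 : H →ₗ[ℂ] H ⊗[ℂ] (H ⊗[ℂ] (H ⊗[ℂ] (H ⊗[ℂ] (H ⊗[ℂ] (H ⊗[ℂ] (H ⊗[ℂ] H)))))) :=
  (LinearMap.lTensor H Δ6) ∘ₗ Δ
def Δ8 : H →ₗ[ℂ]
    H ⊗[ℂ] (H ⊗[ℂ] (H ⊗[ℂ] (H ⊗[ℂ] (H ⊗[ℂ] (H ⊗[ℂ] (H ⊗[ℂ] (H ⊗[ℂ] H))))))) :=
  (LinearMap.lTensor H Δ7) ∘ₗ Δ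
def Δ9 : H →ₗ[ℂ]
    H ⊗[ℂ] (H ⊗[ℂ] (H ⊗[ℂ] (H ⊗[ℂ] (H ⊗[ℂ] (H ⊗[ℂ] (H ⊗[ℂ] (H ⊗[ℂ] (H ⊗[ℂ] H)))))))) :=
  (LinearMap.lTensor H Δ8) ∘ₗ Δ

lemma mulLeft_add (a a' : H) :
    LinearMap.mulLeft ℂ (a + a') = LinearMap.mulLeft ℂ a + LinearMap.mulLeft ℂ a' :=
  LinearMap.ext fun x => add_mul a a' x

lemma mulLeft_smul (c : ℂ) (a : H) :
    LinearMap.mulLeft ℂ (c • a) = c • LinearMap.mulLeft ℂ a :=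
  LinearMap.ext fun x => smul_mul_assoc c a x

/-! ### The mirror bicrossproduct `M(H) = H^cop ⋈ H` on the vector space `H ⊗ H` -/

/-- `(h₍₁₎ ⊗ h₍₂₎) ⊗ h₍₃₎` version of the 2-fold comultiplication. -/
def Δ2' : H →ₗ[ℂ] (H ⊗[ℂ] H) ⊗[ℂ] H := (LinearMap.rTensor H Δ) ∘ₗ Δ

/-- `mulAction2 ((u ⊗ v) ⊗ w) (b ⊗ g) = (u * b * v) ⊗ (w * g)`. -/
def mulAction2 : (H ⊗[ℂ] H) ⊗[ℂ] H →ₗ[ℂ] (H ⊗[ℂ] H) →ₗ[ℂ] (H ⊗[ℂ] H) :=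
  TensorProduct.lift <| LinearMap.mk₂ ℂ
    (fun (uv : H ⊗[ℂ] H) (w : H) =>
      TensorProduct.map (sandwich uv) (LinearMap.mulLeft ℂ w))
    (fun uv uv' w => by (try dsimp only); rw [map_add, TensorProduct.map_add_left])
    (fun c uv w => by (try dsimp only); rw [map_smul, TensorProduct.map_smul_left])
    (fun uv w w' => by (try dsimp only); rw [mulLeft_add, TensorProduct.map_add_right])
    (fun c uv w => by (try dsimp only); rw [mulLeft_smul, TensorProduct.map_smul_right])

/-- The product of the mirror bicrossproduct `M(H)`:
`μM (a ⊗ h) (b ⊗ g) = Σ (a * h₍₁₎ * b * S h₍₂₎) ⊗ (h₍₃₎ * g)`. -/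
def μM : (H ⊗[ℂ] H) →ₗ[ℂ] (H ⊗[ℂ] H) →ₗ[ℂ] (H ⊗[ℂ] H) :=
  TensorProduct.lift <| LinearMap.mk₂ ℂ
    (fun (a h : H) =>
      mulAction2 ((TensorProduct.map (TensorProduct.map (LinearMap.mulLeft ℂ a) S)
        LinearMap.id) (Δ2' h)))
    (fun a a' h => by
      try dsimp only
      rw [mulLeft_add, TensorProduct.map_add_left, TensorProduct.map_add_left,
        LinearMap.add_apply, map_add])
    (fun c a h => by
      try dsimp only
      rw [mulLeft_smul, TensorProduct.map_smul_left, TensorProduct.map_smul_left,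
        LinearMap.smul_apply, map_smul])
    (fun a h h' => by (try dsimp only); rw [map_add, map_add, map_add])
    (fun c a h => by (try dsimp only); rw [map_smul, map_smul, map_smul])

/-- The unit `1 ⊗ 1` of `M(H)`. -/
def oneM : H ⊗[ℂ] H := (1 : H) ⊗ₜ[ℂ] (1 : H)

/-- The counit of `M(H)`: `εM (a ⊗ h) = ε a * ε h`. -/
def εM : H ⊗[ℂ] H →ₗ[ℂ] ℂ :=
  (TensorProduct.lid ℂ ℂ).toLinearMap ∘ₗ TensorProduct.map ε ε

/-- Auxiliary map for the coproduct of `M(H)`: for fixed `a₁, a₂`, it sends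
`h₁ ⊗ (h₂ ⊗ (h₃ ⊗ h₄))` to `(a₂ ⊗ h₂) ⊗ ((a₁ * h₁ * S h₃) ⊗ h₄)`. -/
def deltaMAux (a₁ a₂ : H) :
    H ⊗[ℂ] (H ⊗[ℂ] (H ⊗[ℂ] H)) →ₗ[ℂ] (H ⊗[ℂ] H) ⊗[ℂ] (H ⊗[ℂ] H) :=
  (TensorProduct.map (TensorProduct.mk ℂ H H a₂) LinearMap.id) ∘ₗ
  (TensorProduct.map LinearMap.id
    (TensorProduct.map (LinearMap.mul' ℂ H) LinearMap.id)) ∘ₗ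
  (TensorProduct.map LinearMap.id (TensorProduct.assoc ℂ H H H).symm.toLinearMap) ∘ₗ
  (TensorProduct.assoc ℂ H H (H ⊗[ℂ] H)).toLinearMap ∘ₗ
  (TensorProduct.map (TensorProduct.comm ℂ H H).toLinearMap LinearMap.id) ∘ₗ
  (TensorProduct.assoc ℂ H H (H ⊗[ℂ] H)).symm.toLinearMap ∘ₗ
  (TensorProduct.map (LinearMap.mulLeft ℂ a₁)
    (TensorProduct.map LinearMap.id (TensorProduct.map S LinearMap.id)))

lemma deltaMAux_add_left (a₁ a₁' a₂ : H) :
    deltaMAux (a₁ + a₁') a₂ = deltaMAux a₁ a₂ + deltaMAux (H := H) a₁' a₂ := by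
  unfold deltaMAux
  rw [mulLeft_add, TensorProduct.map_add_left]
  simp only [LinearMap.comp_add]

lemma deltaMAux_smul_left (c : ℂ) (a₁ a₂ : H) :
    deltaMAux (c • a₁) a₂ = c • deltaMAux (H := H) a₁ a₂ := by
  unfold deltaMAux
  rw [mulLeft_smul, TensorProduct.map_smul_left]
  simp only [LinearMap.comp_smul]

lemma deltaMAux_add_right (a₁ a₂ a₂' : H) :
    deltaMAux a₁ (a₂ + a₂') = deltaMAux a₁ a₂ + deltaMAux (H := H) a₁ a₂' := by
  unfold deltaMAux
  rw [map_add, TensorProduct.map_add_left]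
  simp only [LinearMap.add_comp]

lemma deltaMAux_smul_right (c : ℂ) (a₁ a₂ : H) :
    deltaMAux a₁ (c • a₂) = c • deltaMAux (H := H) a₁ a₂ := by
  unfold deltaMAux
  rw [map_smul, TensorProduct.map_smul_left]
  simp only [LinearMap.smul_comp]

/-- `deltaG (a₁ ⊗ a₂) = deltaMAux a₁ a₂`, assembled linearly. -/
def deltaG : H ⊗[ℂ] H →ₗ[ℂ]
    (H ⊗[ℂ] (H ⊗[ℂ] (H ⊗[ℂ] H)) →ₗ[ℂ] (H ⊗[ℂ] H) ⊗[ℂ] (H ⊗[ℂ] H)) :=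
  TensorProduct.lift <| LinearMap.mk₂ ℂ deltaMAux
    deltaMAux_add_left deltaMAux_smul_left deltaMAux_add_right deltaMAux_smul_right

/-- The coproduct of `M(H)`:
`ΔM (a ⊗ h) = Σ (a₍₂₎ ⊗ h₍₂₎) ⊗ ((a₍₁₎ * h₍₁₎ * S h₍₃₎) ⊗ h₍₄₎)`. -/
def ΔM : H ⊗[ℂ] H →ₗ[ℂ] (H ⊗[ℂ] H) ⊗[ℂ] (H ⊗[ℂ] H) :=
  TensorProduct.lift <| LinearMap.mk₂ ℂ
    (fun (a h : H) => (deltaG (Δ a)) (Δ3 h))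
    (fun a a' h => by (try dsimp only); rw [map_add, map_add, LinearMap.add_apply])
    (fun c a h => by (try dsimp only); rw [map_smul, map_smul, LinearMap.smul_apply])
    (fun a h h' => by (try dsimp only); rw [map_add, map_add])
    (fun c a h => by (try dsimp only); rw [map_smul, map_smul])

/-- The componentwise (tensor-square) product on `M(H) ⊗ M(H)`. -/
def tensorMul2 :
    ((H ⊗[ℂ] H) ⊗[ℂ] (H ⊗[ℂ] H)) →ₗ[ℂ] ((H ⊗[ℂ] H) ⊗[ℂ] (H ⊗[ℂ] H)) →ₗ[ℂ]
      ((H ⊗[ℂ] H) ⊗[ℂ] (H ⊗[ℂ] H)) :=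
  TensorProduct.lift <| LinearMap.mk₂ ℂ
    (fun (u v : H ⊗[ℂ] H) => TensorProduct.map (μM u) (μM v))
    (fun u u' v => by (try dsimp only); rw [map_add, TensorProduct.map_add_left])
    (fun c u v => by (try dsimp only); rw [map_smul, TensorProduct.map_smul_left])
    (fun u v v' => by (try dsimp only); rw [map_add, TensorProduct.map_add_right])
    (fun c u v => by (try dsimp only); rw [map_smul, TensorProduct.map_smul_right])

/-- The antipode candidate of `M(H)`:
`SM (a ⊗ h) = Σ (1 ⊗ S h₍₂₎) · (S (a * h₍₁₎ * S h₍₃₎) ⊗ 1)`,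
where `·` is the mirror product `μM`. -/
def SM : H ⊗[ℂ] H →ₗ[ℂ] H ⊗[ℂ] H :=
  TensorProduct.lift <| LinearMap.mk₂ ℂ
    (fun (a h : H) =>
      (TensorProduct.lift μM)
        ((TensorProduct.map
            ((TensorProduct.mk ℂ H H 1) ∘ₗ S)
            (((TensorProduct.mk ℂ H H).flip 1) ∘ₗ S ∘ₗ (LinearMap.mul' ℂ H) ∘ₗ
              (TensorProduct.map (LinearMap.mulLeft ℂ a) S)))
          ((TensorProduct.assoc ℂ H H H).toLinearMap
            ((TensorProduct.map (TensorProduct.comm ℂ H H).toLinearMap LinearMap.id)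
              ((TensorProduct.assoc ℂ H H H).symm.toLinearMap (Δ2 h))))))
    (fun a a' h => by
      try dsimp only
      rw [mulLeft_add, TensorProduct.map_add_left, LinearMap.comp_add, LinearMap.comp_add,
        LinearMap.comp_add, TensorProduct.map_add_right, LinearMap.add_apply, map_add])
    (fun c a h => by
      try dsimp only
      rw [mulLeft_smul, TensorProduct.map_smul_left, LinearMap.comp_smul, LinearMap.comp_smul,
        LinearMap.comp_smul, TensorProduct.map_smul_right, LinearMap.smul_apply, map_smul])
    (fun a h h' => by (try dsimp only); simp only [map_add])
    (fun c a h => by (try dsimp only); simp only [map_smul])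

/-- `ℓ ∈ H` is a normalized (two-sided) Haar integral:
`x ℓ = ε(x) ℓ = ℓ x` for all `x`, and `ε(ℓ) = 1`. -/
def IsHaarIntegral (ℓ : H) : Prop :=
  ε ℓ = 1 ∧ ∀ x : H, x * ℓ = ε x • ℓ ∧ ℓ * x = ε x • ℓ

/-- Fourfold tensor product of operators on `H*`, acting on the four edges
`ψ¹ ⊗ (ψ² ⊗ (ψ³ ⊗ ψ⁴))`. -/
def map4 (f₁ f₂ f₃ f₄ : Module.Dual ℂ H →ₗ[ℂ] Module.Dual ℂ H) :
    Module.Dual ℂ H ⊗[ℂ] (Module.Dual ℂ H ⊗[ℂ] (Module.Dual ℂ H ⊗[ℂ] Module.Dual ℂ H))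
      →ₗ[ℂ]
    Module.Dual ℂ H ⊗[ℂ] (Module.Dual ℂ H ⊗[ℂ] (Module.Dual ℂ H ⊗[ℂ] Module.Dual ℂ H)) :=
  TensorProduct.map f₁ (TensorProduct.map f₂ (TensorProduct.map f₃ f₄))


section AntipodeAux

open Coalgebra

lemma mul'_assoc_aux :
    (LinearMap.mul' ℂ H) ∘ₗ LinearMap.lTensor H (LinearMap.mul' ℂ H) ∘ₗ
      (TensorProduct.assoc ℂ H H H).toLinearMap
    = (LinearMap.mul' ℂ H) ∘ₗ LinearMap.rTensor H (LinearMap.mul' ℂ H) := by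
  apply TensorProduct.ext_threefold
  intro x y z
  simp [mul_assoc]

variable {C : Type} [AddCommGroup C] [Module ℂ C] [Coalgebra ℂ C]

/-- Convolution product on linear maps from a coalgebra `C` to `H`. -/
def conv (f g : C →ₗ[ℂ] H) : C →ₗ[ℂ] H :=
  (LinearMap.mul' ℂ H) ∘ₗ TensorProduct.map f g ∘ₗ Coalgebra.comul

/-- Convolution unit. -/
def convOne : C →ₗ[ℂ] H := Algebra.linearMap ℂ H ∘ₗ Coalgebra.counit

lemma conv_apply (f g : C →ₗ[ℂ] H) (c : C) :
    conv f g c = LinearMap.mul' ℂ H (TensorProduct.map f g (Coalgebra.comul c)) := rfl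

lemma conv_one_left (f : C →ₗ[ℂ] H) : conv convOne f = f := by
  have h1 : TensorProduct.map (convOne (C := C) (H := H)) f
      = TensorProduct.map (Algebra.linearMap ℂ H) f ∘ₗ
          LinearMap.rTensor C (Coalgebra.counit (R := ℂ)) := by
    apply TensorProduct.ext'
    intro x y
    simp [convOne]
  apply LinearMap.ext
  intro c
  rw [conv_apply, h1, LinearMap.comp_apply, Coalgebra.rTensor_counit_comul]
  simp

lemma conv_one_right (f : C →ₗ[ℂ] H) : conv f convOne = f := by
  have h1 : TensorProduct.map f (convOne (C := C) (H := H))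
      = TensorProduct.map f (Algebra.linearMap ℂ H) ∘ₗ
          LinearMap.lTensor C (Coalgebra.counit (R := ℂ)) := by
    apply TensorProduct.ext'
    intro x y
    simp [convOne]
  apply LinearMap.ext
  intro c
  rw [conv_apply, h1, LinearMap.comp_apply, Coalgebra.lTensor_counit_comul]
  simp

lemma conv_assoc (f g h : C →ₗ[ℂ] H) : conv (conv f g) h = conv f (conv g h) := by
  apply LinearMap.ext
  intro c
  have e1 : ∀ t : C ⊗[ℂ] C, TensorProduct.map (conv f g) h t
      = LinearMap.rTensor H (LinearMap.mul' ℂ H)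
          (TensorProduct.map (TensorProduct.map f g) h
            (LinearMap.rTensor C (Coalgebra.comul (R := ℂ)) t)) := by
    intro t
    induction t using TensorProduct.induction_on with
    | zero => simp
    | tmul x y => simp [conv_apply]
    | add u v hu hv => simp [map_add, hu, hv]
  have e2 : ∀ t : C ⊗[ℂ] C, TensorProduct.map f (conv g h) t
      = LinearMap.lTensor H (LinearMap.mul' ℂ H)
          (TensorProduct.map f (TensorProduct.map g h)
            (LinearMap.lTensor C (Coalgebra.comul (R := ℂ)) t)) := by
    intro t
    induction t using TensorProduct.induction_on with
    | zero => simp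
    | tmul x y => simp [conv_apply]
    | add u v hu hv => simp [map_add, hu, hv]
  rw [conv_apply, conv_apply, e1, e2, ← Coalgebra.coassoc_apply c,
    TensorProduct.map_map_assoc]
  exact (LinearMap.congr_fun (mul'_assoc_aux (H := H))
    (TensorProduct.map (TensorProduct.map f g) h
      (LinearMap.rTensor C (Coalgebra.comul (R := ℂ)) (Coalgebra.comul c)))).symm

/-- `ν (x ⊗ y) = S y * S x`. -/
def nuMap : H ⊗[ℂ] H →ₗ[ℂ] H :=
  (LinearMap.mul' ℂ H) ∘ₗ TensorProduct.map S S ∘ₗ (TensorProduct.comm ℂ H H).toLinearMap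

lemma nuMap_tmul (x u : H) : nuMap (x ⊗ₜ[ℂ] u) = S u * S x := by simp [nuMap]

/-- `Sμ (x ⊗ y) = S (x * y)`. -/
def smuMap : H ⊗[ℂ] H →ₗ[ℂ] H := (S (H := H)) ∘ₗ LinearMap.mul' ℂ H

lemma smuMap_tmul (x u : H) : smuMap (x ⊗ₜ[ℂ] u) = S (x * u) := by simp [smuMap]

lemma comul_tmul_tensor (a b : H) :
    (Coalgebra.comul (R := ℂ) (a ⊗ₜ[ℂ] b) : (H ⊗[ℂ] H) ⊗[ℂ] (H ⊗[ℂ] H))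
      = TensorProduct.tensorTensorTensorComm ℂ H H H H
          (Coalgebra.comul (R := ℂ) a ⊗ₜ[ℂ] Coalgebra.comul (R := ℂ) b) := rfl

lemma counit_tmul_tensor (a b : H) :
    (Coalgebra.counit (R := ℂ) (a ⊗ₜ[ℂ] b) : ℂ)
      = Coalgebra.counit (R := ℂ) a * Coalgebra.counit (R := ℂ) b := by
  rw [TensorProduct.counit_tmul, smul_eq_mul, mul_comm]

lemma numu_pure_right (t : H ⊗[ℂ] H) (u v : H) :
    LinearMap.mul' ℂ H (TensorProduct.map nuMap (LinearMap.mul' ℂ H)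
      (TensorProduct.tensorTensorTensorComm ℂ H H H H (t ⊗ₜ[ℂ] (u ⊗ₜ[ℂ] v))))
    = S u * (LinearMap.mul' ℂ H (LinearMap.rTensor H (S (H := H)) t)) * v := by
  induction t using TensorProduct.induction_on with
  | zero => simp
  | tmul x y => simp [nuMap_tmul, mul_assoc]
  | add t₁ t₂ h₁ h₂ =>
      simp only [TensorProduct.add_tmul, map_add, h₁, h₂, mul_add, add_mul]

lemma numu_comul_left (a : H) (s : H ⊗[ℂ] H) :
    LinearMap.mul' ℂ H (TensorProduct.map nuMap (LinearMap.mul' ℂ H)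
      (TensorProduct.tensorTensorTensorComm ℂ H H H H
        (Coalgebra.comul (R := ℂ) a ⊗ₜ[ℂ] s)))
    = Coalgebra.counit (R := ℂ) a •
        LinearMap.mul' ℂ H (LinearMap.rTensor H (S (H := H)) s) := by
  induction s using TensorProduct.induction_on with
  | zero => simp
  | tmul u v =>
      rw [numu_pure_right, HopfAlgebra.mul_antipode_rTensor_comul_apply]
      simp [Algebra.algebraMap_eq_smul_one, mul_smul_comm, smul_mul_assoc]
  | add s₁ s₂ h₁ h₂ =>
      simp only [TensorProduct.tmul_add, map_add, h₁, h₂, smul_add]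

lemma conv_nu_mu :
    conv (nuMap (H := H)) (LinearMap.mul' ℂ H) = (convOne : H ⊗[ℂ] H →ₗ[ℂ] H) := by
  apply TensorProduct.ext'
  intro a b
  rw [conv_apply, comul_tmul_tensor, numu_comul_left,
    HopfAlgebra.mul_antipode_rTensor_comul_apply]
  simp [convOne, counit_tmul_tensor, Algebra.algebraMap_eq_smul_one, smul_smul]
  rw [mul_comm]

lemma musmu_aux (t s : H ⊗[ℂ] H) :
    TensorProduct.map (LinearMap.mul' ℂ H) (smuMap (H := H))
      (TensorProduct.tensorTensorTensorComm ℂ H H H H (t ⊗ₜ[ℂ] s))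
    = LinearMap.lTensor H (S (H := H)) (t * s) := by
  induction t using TensorProduct.induction_on with
  | zero => simp
  | tmul x y =>
      induction s using TensorProduct.induction_on with
      | zero => simp
      | tmul u v => simp [smuMap_tmul, Algebra.TensorProduct.tmul_mul_tmul]
      | add s₁ s₂ h₁ h₂ =>
          simp only [TensorProduct.tmul_add, map_add, mul_add, h₁, h₂]
  | add t₁ t₂ h₁ h₂ =>
      simp only [TensorProduct.add_tmul, map_add, add_mul, h₁, h₂]

lemma conv_mu_smu :
    conv (LinearMap.mul' ℂ H) (smuMap (H := H)) = (convOne : H ⊗[ℂ] H →ₗ[ℂ] H) := by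
  apply TensorProduct.ext'
  intro a b
  rw [conv_apply, comul_tmul_tensor, musmu_aux, ← Bialgebra.comul_mul,
    HopfAlgebra.mul_antipode_lTensor_comul_apply]
  simp [convOne, counit_tmul_tensor, Bialgebra.counit_mul]
  exact Algebra.commutes _ _

/-- The antipode is anti-multiplicative. -/
lemma antipode_mul_rev (x y : H) : S (x * y) = S y * S x := by
  have key : nuMap (H := H) = smuMap := by
    calc nuMap (H := H) = conv nuMap convOne := (conv_one_right _).symm
    _ = conv nuMap (conv (LinearMap.mul' ℂ H) smuMap) := by rw [conv_mu_smu]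
    _ = conv (conv nuMap (LinearMap.mul' ℂ H)) smuMap := (conv_assoc _ _ _).symm
    _ = conv convOne smuMap := by rw [conv_nu_mu]
    _ = smuMap := conv_one_left _
  have h := DFunLike.congr_fun key (x ⊗ₜ[ℂ] y)
  rw [nuMap_tmul, smuMap_tmul] at h
  exact h.symm

lemma sandwich_mapS_mul (t t' : H ⊗[ℂ] H) :
    sandwich (TensorProduct.map S LinearMap.id t') ∘ₗ
      sandwich (TensorProduct.map S LinearMap.id t)
    = sandwich (TensorProduct.map S LinearMap.id (t * t')) := by
  induction t using TensorProduct.induction_on with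
  | zero => simp
  | tmul x y =>
      induction t' using TensorProduct.induction_on with
      | zero => simp
      | tmul u v =>
          apply LinearMap.ext
          intro z
          simp [Algebra.TensorProduct.tmul_mul_tmul, antipode_mul_rev, mul_assoc]
      | add u₁ u₂ h₁ h₂ =>
          simp only [mul_add, map_add, ← h₁, ← h₂, LinearMap.add_comp]
  | add t₁ t₂ h₁ h₂ =>
      simp only [add_mul, map_add, ← h₁, ← h₂, LinearMap.comp_add]

lemma comm_mul_tensor (t t' : H ⊗[ℂ] H) :
    (TensorProduct.comm ℂ H H) (t * t')
      = (TensorProduct.comm ℂ H H) t * (TensorProduct.comm ℂ H H) t' := by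
  induction t using TensorProduct.induction_on with
  | zero => simp
  | tmul x y =>
      induction t' using TensorProduct.induction_on with
      | zero => simp
      | tmul u v => simp [Algebra.TensorProduct.tmul_mul_tmul]
      | add u₁ u₂ h₁ h₂ => simp only [mul_add, map_add, h₁, h₂]
  | add t₁ t₂ h₁ h₂ => simp only [add_mul, map_add, h₁, h₂]

end AntipodeAux


/-- (Type-B fundamental ribbon operators multiply according to
`H^cop ⊗ H`.)  With `F^{(a,h)}(τ_R, ±) = ε(h) • T^a_±` and
`F^{(a,h)}(τ̃_L, ±) = ε(a) • L^h_±`, for each fixed sign and all `a, a', h, h' ∈ H`: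
`F^{(a,h)}(τ_R,±) ∘ F^{(a',h')}(τ_R,±) = F^{(aa',hh')}(τ_R,±)` and
`F^{(a,h)}(τ̃_L,±) ∘ F^{(a',h')}(τ̃_L,±) = F^{(aa',hh')}(τ̃_L,±)`. -/
theorem statement5 [FiniteDimensional ℂ H] (hS : ∀ x : H, S (S x) = x) :
    ∀ a a' h h' : H,
      ((ε h • Tp a) ∘ₗ (ε h' • Tp a') = ε (h * h') • Tp (a * a')) ∧
      ((ε h • Tm a) ∘ₗ (ε h' • Tm a') = ε (h * h') • Tm (a * a')) ∧
      ((ε a • Lp h) ∘ₗ (ε a' • Lp h') = ε (a * a') • Lp (h * h')) ∧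
      ((ε a • Lm h) ∘ₗ (ε a' • Lm h') = ε (a * a') • Lm (h * h')) := by
  intro a a' h h'
  refine ⟨?_, ?_, ?_, ?_⟩
  · rw [LinearMap.smul_comp, LinearMap.comp_smul, smul_smul, Bialgebra.counit_mul]
    congr 1
    unfold Tp
    rw [LinearMap.dualMap_comp_dualMap, ← LinearMap.mulLeft_mul, ← antipode_mul_rev]
  · rw [LinearMap.smul_comp, LinearMap.comp_smul, smul_smul, Bialgebra.counit_mul]
    congr 1
    unfold Tm
    rw [LinearMap.dualMap_comp_dualMap, ← LinearMap.mulRight_mul]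
  · rw [LinearMap.smul_comp, LinearMap.comp_smul, smul_smul, Bialgebra.counit_mul]
    congr 1
    unfold Lp
    rw [LinearMap.dualMap_comp_dualMap, sandwich_mapS_mul, ← Bialgebra.comul_mul]
  · rw [LinearMap.smul_comp, LinearMap.comp_smul, smul_smul, Bialgebra.counit_mul]
    congr 1
    unfold Lm
    rw [LinearMap.dualMap_comp_dualMap, sandwich_mapS_mul, ← comm_mul_tensor,
      ← Bialgebra.comul_mul]

end SemidualKitaev
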